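/- arXiv:2010.04624 — 2 statements merged into one kernel-verified Lean document; each statement's English description precedes it below -/
import Mathlib

section
/- For every n ≥ 3, the fan hypergraph F_n satisfies λ(F_n) ≥ (4(n−1))^{1/3}·(1 − 1/(n−1)). -/
open Finset

/-- `c` lies strictly inside the clockwise open arc from `a` to `b` on the cycle `ZMod n`. -/
def between (n : ℕ) (a b c : ZMod n) : Prop :=
  0 < (c - a).val ∧ (c - a).val < (b - a).val

/-- The 2-subsets `{a,b}` and `{c,d}` (with `a,b,c,d` distinct) cross: `c` and `d` lie in
different open arcs of the cycle determined by `a` and `b`. -/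
def pairCross (n : ℕ) (a b c d : ZMod n) : Prop :=
  (between n a b c ∧ ¬ between n a b d) ∨ (¬ between n a b c ∧ between n a b d)

/-- Two 3-subsets cross if some 2-subset of one crosses some 2-subset of the other. -/
def triCross (n : ℕ) (e f : Finset (ZMod n)) : Prop :=
  ∃ a ∈ e, ∃ b ∈ e, ∃ c ∈ f, ∃ d ∈ f,
    ({a, b, c, d} : Finset (ZMod n)).card = 4 ∧ pairCross n a b c d

/-- A 3-uniform hypergraph on the vertex set `ZMod n` (given by its hyperedge set `E`)
is maximal outerplanar: all edges have size 3, there are `n - 2` of them, and under some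
bijection (permutation) of the vertex set with `ZMod n` they are pairwise non-crossing. -/
def IsMaxOuterplanar (n : ℕ) (E : Finset (Finset (ZMod n))) : Prop :=
  (∀ e ∈ E, e.card = 3) ∧ E.card = n - 2 ∧
  ∃ σ : Equiv.Perm (ZMod n),
    ∀ e ∈ E, ∀ f ∈ E, e ≠ f → ¬ triCross n (e.image σ) (f.image σ)

/-- A 3-uniform hypergraph on `ZMod n` is outerplanar if it is a subhypergraph of a
maximal outerplanar one on the same vertex set. -/
def IsOuterplanar (n : ℕ) (E : Finset (Finset (ZMod n))) : Prop :=
  ∃ E' : Finset (Finset (ZMod n)), E ⊆ E' ∧ IsMaxOuterplanar n E'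

/-- The polynomial form `P_H(x) = 3 ∑_{e ∈ E} ∏_{v ∈ e} x v` of a 3-uniform hypergraph. -/
noncomputable def polyForm (n : ℕ) (E : Finset (Finset (ZMod n))) (x : ZMod n → ℝ) : ℝ :=
  3 * ∑ e ∈ E, ∏ v ∈ e, x v

/-- The spectral radius `λ(H) = max { P_H(x) : x ≥ 0, ∑_v x_v³ = 1 }`. -/
noncomputable def specRad (n : ℕ) (E : Finset (Finset (ZMod n))) : ℝ :=
  sSup {r : ℝ | ∃ x : ZMod n → ℝ,
    (∀ v, 0 ≤ x v) ∧ (∑ᶠ v, (x v) ^ 3) = 1 ∧ r = polyForm n E x}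

/-- `H` attains the maximum spectral radius among all outerplanar 3-uniform hypergraphs
on `n` vertices. -/
def IsExtremal (n : ℕ) (E : Finset (Finset (ZMod n))) : Prop :=
  IsOuterplanar n E ∧ ∀ E' : Finset (Finset (ZMod n)), IsOuterplanar n E' →
    specRad n E' ≤ specRad n E

/-- The fan hypergraph `F_n` on `{0, 1, …, n-1}`, with hyperedges `{0, i, i+1}` for
`1 ≤ i ≤ n - 2`; its shadow is `K₁ + P_{n-1}`. -/
def fanEdges (n : ℕ) : Finset (Finset (ZMod n)) :=
  (Finset.Icc 1 (n - 2)).image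
    (fun i : ℕ => ({0, (i : ZMod n), ((i + 1 : ℕ) : ZMod n)} : Finset (ZMod n)))

/-- The neighbourhood of `v` in the shadow graph of the hypergraph with edge set `E`. -/
def shadowNbrs (n : ℕ) (E : Finset (Finset (ZMod n))) (v : ZMod n) : Set (ZMod n) :=
  {u : ZMod n | u ≠ v ∧ ∃ e ∈ E, v ∈ e ∧ u ∈ e}

/-- The degree of `v` in the shadow graph. -/
noncomputable def shadowDeg (n : ℕ) (E : Finset (Finset (ZMod n))) (v : ZMod n) : ℕ :=
  (shadowNbrs n E v).ncard

/-- The edge set of the shadow graph: all 2-subsets contained in some hyperedge. -/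
def shadowEdges (n : ℕ) (E : Finset (Finset (ZMod n))) : Finset (Finset (ZMod n)) :=
  E.sup (fun e => e.powersetCard 2)

/-- The fan hypergraph satisfies `λ(F_n) ≥ (4(n-1))^{1/3} (1 - 1/(n-1))` for `n ≥ 3`. -/
theorem stmt_2 (n : ℕ) (hn : 3 ≤ n) :
    (4 * ((n : ℝ) - 1)) ^ ((1 : ℝ) / 3) * (1 - 1 / ((n : ℝ) - 1)) ≤
      specRad n (fanEdges n) := by
  haveI : NeZero n := ⟨by omega⟩
  set m : ℝ := (n : ℝ) - 1 with hm
  have hn3 : (3:ℝ) ≤ (n:ℝ) := by exact_mod_cast hn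
  have hm2 : (2:ℝ) ≤ m := by simp only [hm]; linarith
  have hm0 : (0:ℝ) < m := by linarith
  set a : ℝ := ((1:ℝ)/3) ^ ((1:ℝ)/3) with ha
  set b : ℝ := (2/(3*m)) ^ ((1:ℝ)/3) with hb
  have ha0 : 0 ≤ a := Real.rpow_nonneg (by norm_num) _
  have hb0 : 0 ≤ b := Real.rpow_nonneg (by positivity) _
  have ha3 : a ^ 3 = 1/3 := by
    rw [ha, ← Real.rpow_natCast (((1:ℝ)/3) ^ ((1:ℝ)/3)) 3,
      ← Real.rpow_mul (by norm_num)]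
    norm_num
  have hb3 : b ^ 3 = 2/(3*m) := by
    rw [hb, ← Real.rpow_natCast ((2/(3*m)) ^ ((1:ℝ)/3)) 3,
      ← Real.rpow_mul (by positivity)]
    norm_num
  set x : ZMod n → ℝ := fun v => if v = 0 then a else b with hx
  have hxnn : ∀ v, 0 ≤ x v := by
    intro v; simp only [hx]; split <;> assumption
  have hcard : Fintype.card (ZMod n) = n := ZMod.card n
  have hsum : (∑ᶠ v, (x v) ^ 3) = 1 := by
    rw [finsum_eq_sum_of_fintype]
    rw [← Finset.add_sum_erase Finset.univ _ (Finset.mem_univ (0 : ZMod n))]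
    have h1 : x 0 ^ 3 = 1/3 := by simp [hx, ha3]
    have h2 : ∀ v ∈ Finset.univ.erase (0 : ZMod n), x v ^ 3 = 2/(3*m) := by
      intro v hv
      rw [Finset.mem_erase] at hv
      simp [hx, hv.1, hb3]
    rw [h1, Finset.sum_congr rfl h2, Finset.sum_const,
      Finset.card_erase_of_mem (Finset.mem_univ _), Finset.card_univ, hcard,
      nsmul_eq_mul]
    have : ((n - 1 : ℕ) : ℝ) = m := by
      rw [Nat.cast_sub (by omega)]; simp [hm]
    rw [this]
    field_simp
    ring
  have hval : ∀ k : ℕ, k < n → ((k : ZMod n)).val = k := fun k hk =>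
    ZMod.val_cast_of_lt hk
  -- distinctness facts
  have hne : ∀ i ∈ Finset.Icc 1 (n-2),
      (i : ZMod n) ≠ 0 ∧ ((i+1 : ℕ) : ZMod n) ≠ 0 ∧
      (i : ZMod n) ≠ ((i+1 : ℕ) : ZMod n) := by
    intro i hi
    rw [Finset.mem_Icc] at hi
    have h1 : i < n := by omega
    have h2 : i + 1 < n := by omega
    refine ⟨?_, ?_, ?_⟩
    · intro h
      have := hval i h1
      rw [h, ZMod.val_zero] at this
      omega
    · intro h
      have := hval (i+1) h2
      rw [h, ZMod.val_zero] at this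
      omega
    · intro h
      have e1 := hval i h1
      have e2 := hval (i+1) h2
      rw [h, e2] at e1
      omega
  have hprod : ∀ i ∈ Finset.Icc 1 (n-2),
      (∏ v ∈ ({0, (i : ZMod n), ((i + 1 : ℕ) : ZMod n)} : Finset (ZMod n)), x v)
        = a * (b * b) := by
    intro i hi
    obtain ⟨h1, h2, h3⟩ := hne i hi
    rw [Finset.prod_insert (by
        simp only [Finset.mem_insert, Finset.mem_singleton]
        push_neg
        exact ⟨Ne.symm h1, Ne.symm h2⟩),
      Finset.prod_insert (by simp only [Finset.mem_singleton]; exact h3),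
      Finset.prod_singleton]
    simp only [hx, if_pos rfl, if_neg h1, if_neg h2]
  have hinj : Set.InjOn
      (fun i : ℕ => ({0, (i : ZMod n), ((i + 1 : ℕ) : ZMod n)} : Finset (ZMod n)))
      (Finset.Icc 1 (n-2)) := by
    intro i hi j hj hij
    simp only [Finset.coe_Icc, Set.mem_Icc] at hi hj
    have hi1 : i < n := by omega
    have hi2 : i + 1 < n := by omega
    have hj1 : j < n := by omega
    have hj2 : j + 1 < n := by omega
    have hij' : ({0, (i : ZMod n), ((i + 1 : ℕ) : ZMod n)} : Finset (ZMod n))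
        = {0, (j : ZMod n), ((j + 1 : ℕ) : ZMod n)} := hij
    have hmem : (i : ZMod n) ∈ ({0, (j : ZMod n), ((j + 1 : ℕ) : ZMod n)} : Finset (ZMod n)) := by
      rw [← hij']; simp
    have hmem' : (j : ZMod n) ∈ ({0, (i : ZMod n), ((i + 1 : ℕ) : ZMod n)} : Finset (ZMod n)) := by
      rw [hij']; simp
    simp only [Finset.mem_insert, Finset.mem_singleton] at hmem hmem'
    have vi := hval i hi1
    have vi2 := hval (i+1) hi2
    have vj := hval j hj1
    have vj2 := hval (j+1) hj2
    have c1 : i = 0 ∨ i = j ∨ i = j + 1 := by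
      rcases hmem with h | h | h
      · left; rw [h, ZMod.val_zero] at vi; omega
      · right; left; rw [h, vj] at vi; omega
      · right; right; rw [h, vj2] at vi; omega
    have c2 : j = 0 ∨ j = i ∨ j = i + 1 := by
      rcases hmem' with h | h | h
      · left; rw [h, ZMod.val_zero] at vj; omega
      · right; left; rw [h, vi] at vj; omega
      · right; right; rw [h, vi2] at vj; omega
    omega
  have hpoly : polyForm n (fanEdges n) x = 3 * ((n - 2 : ℕ) : ℝ) * (a * (b * b)) := by
    rw [polyForm, fanEdges, Finset.sum_image (fun i hi j hj h => hinj hi hj h)]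
    rw [Finset.sum_congr rfl hprod, Finset.sum_const, Nat.card_Icc, nsmul_eq_mul]
    have : n - 2 + 1 - 1 = n - 2 := by omega
    rw [this]; ring
  have hmem : polyForm n (fanEdges n) x ∈ {r : ℝ | ∃ x : ZMod n → ℝ,
      (∀ v, 0 ≤ x v) ∧ (∑ᶠ v, (x v) ^ 3) = 1 ∧ r = polyForm n (fanEdges n) x} :=
    ⟨x, hxnn, hsum, rfl⟩
  have hbdd : BddAbove {r : ℝ | ∃ x : ZMod n → ℝ,
      (∀ v, 0 ≤ x v) ∧ (∑ᶠ v, (x v) ^ 3) = 1 ∧ r = polyForm n (fanEdges n) x} := by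
    refine ⟨3 * ((fanEdges n).card : ℝ), ?_⟩
    rintro r ⟨y, hynn, hysum, rfl⟩
    rw [finsum_eq_sum_of_fintype] at hysum
    have hyle : ∀ v, y v ≤ 1 := by
      intro v
      have h1 : y v ^ 3 ≤ 1 := by
        rw [← hysum]
        exact Finset.single_le_sum (fun i _ => pow_nonneg (hynn i) 3) (Finset.mem_univ v)
      nlinarith [hynn v, sq_nonneg (y v), sq_nonneg (y v - 1), sq_nonneg (y v + 1)]
    rw [polyForm]
    have : ∑ e ∈ fanEdges n, ∏ v ∈ e, y v ≤ ∑ e ∈ fanEdges n, (1:ℝ) :=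
      Finset.sum_le_sum (fun e _ =>
        Finset.prod_le_one (fun v _ => hynn v) (fun v _ => hyle v))
    rw [Finset.sum_const, nsmul_eq_mul, mul_one] at this
    linarith
  have hle : polyForm n (fanEdges n) x ≤ specRad n (fanEdges n) :=
    le_csSup hbdd hmem
  have hcast : ((n - 2 : ℕ) : ℝ) = m - 1 := by
    rw [Nat.cast_sub (by omega)]; simp [hm]; ring
  have heq : (4 * m) ^ ((1 : ℝ) / 3) * (1 - 1 / m) = 3 * (m - 1) * (a * (b * b)) := by
    have hL0 : 0 ≤ (4 * m) ^ ((1 : ℝ) / 3) * (1 - 1 / m) := by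
      apply mul_nonneg (Real.rpow_nonneg (by linarith) _)
      rw [sub_nonneg]
      rw [div_le_one hm0]; linarith
    have hR0 : 0 ≤ 3 * (m - 1) * (a * (b * b)) := by
      apply mul_nonneg (by linarith) (mul_nonneg ha0 (mul_nonneg hb0 hb0))
    have hcube : ((4 * m) ^ ((1 : ℝ) / 3) * (1 - 1 / m)) ^ 3
        = (3 * (m - 1) * (a * (b * b))) ^ 3 := by
      have hL3 : ((4 * m) ^ ((1 : ℝ) / 3)) ^ 3 = 4 * m := by
        rw [← Real.rpow_natCast ((4 * m) ^ ((1:ℝ)/3)) 3, ← Real.rpow_mul (by linarith)]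
        norm_num
      have hR3 : (3 * (m - 1) * (a * (b * b))) ^ 3
          = 27 * (m-1)^3 * (a^3 * (b^3)^2) := by ring
      rw [mul_pow, hL3, hR3, ha3, hb3]
      field_simp
      ring
    exact (pow_left_strictMonoOn₀ (by norm_num : (3:ℕ) ≠ 0)).injOn hL0 hR0 hcube
  calc (4 * ((n : ℝ) - 1)) ^ ((1 : ℝ) / 3) * (1 - 1 / ((n : ℝ) - 1))
      = 3 * (m - 1) * (a * (b * b)) := heq
    _ = polyForm n (fanEdges n) x := by rw [hpoly, hcast]
    _ ≤ specRad n (fanEdges n) := hle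
end

section
/- For every n ≥ 3, if H attains the maximum spectral radius among all outerplanar 3-uniform hypergraphs on n vertices, then H is edge-maximal: H is itself maximal outerplanar, i.e., H has exactly n − 2 hyperedges which (under a suitable bijection of its vertex set with ZMod n) form a family of pairwise non-crossing 3-subsets, and consequently its shadow has exactly 2n − 3 edges. -/
open Finset

set_option linter.unusedSectionVars false
set_option linter.unusedVariables false
set_option maxHeartbeats 1000000

section Aux
variable {n : ℕ} [NeZero n]


lemma mod2 {s : ℕ} (h : s < 2 * n) : s % n = if s < n then s else s - n := by
  have hn : 0 < n := Nat.pos_of_ne_zero (NeZero.ne n)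
  split_ifs with h1
  · exact Nat.mod_eq_of_lt h1
  · rw [Nat.mod_eq_sub_mod (by omega)]
    exact Nat.mod_eq_of_lt (by omega)

lemma dmod {x y : ℕ} (hx : x < n) (hy : y < n) :
    (x + n - y) % n = if y ≤ x then x - y else x + n - y := by
  have hn : 0 < n := Nat.pos_of_ne_zero (NeZero.ne n)
  rw [mod2 (by omega)]
  split_ifs <;> omega

lemma val_sub' (u v : ZMod n) : (u - v).val = (u.val + n - v.val) % n := by
  have hn : 0 < n := Nat.pos_of_ne_zero (NeZero.ne n)
  have hd := ZMod.val_lt (u - v)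
  have hu := ZMod.val_lt u
  have hv := ZMod.val_lt v
  have h : u.val = ((u - v).val + v.val) % n := by
    rw [← ZMod.val_add, sub_add_cancel]
  rw [mod2 (by omega)] at h
  rw [mod2 (by omega)]
  split_ifs at h ⊢ <;> omega

lemma delta_sub (a u w : ZMod n) :
    (w - u).val = ((w - a).val + n - (u - a).val) % n := by
  rw [show w - u = (w - a) - (u - a) by ring, val_sub']

lemma delta_inj (a : ZMod n) {s t : ZMod n} (h : (s - a).val = (t - a).val) : s = t := by
  have := ZMod.val_injective n h
  have h2 : s - a + a = t - a + a := by rw [this]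
  simpa using h2

lemma delta_ne (a : ZMod n) {s t : ZMod n} (h : (s - a).val ≠ (t - a).val) : s ≠ t :=
  fun he => h (by rw [he])

lemma delta_self (a : ZMod n) : (a - a).val = 0 := by simp

lemma delta_eq_zero_iff (a t : ZMod n) : (t - a).val = 0 ↔ t = a := by
  constructor
  · intro h
    have : (t - a) = 0 := by
      have := ZMod.val_injective n (a₁ := t - a) (a₂ := 0) (by simpa using h)
      exact this
    have h2 : t - a + a = 0 + a := by rw [this]
    simpa using h2
  · intro h; simp [h]

lemma card3 {α : Type*} [DecidableEq α] {a b c : α} (h1 : a ≠ b) (h2 : a ≠ c) (h3 : b ≠ c) :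
    ({a, b, c} : Finset α).card = 3 := by
  rw [card_insert_of_notMem (by simp [h1, h2]), card_insert_of_notMem (by simp [h3]),
    card_singleton]

lemma card4 {α : Type*} [DecidableEq α] {a b c d : α} (h1 : a ≠ b) (h2 : a ≠ c) (h3 : a ≠ d)
    (h4 : b ≠ c) (h5 : b ≠ d) (h6 : c ≠ d) : ({a, b, c, d} : Finset α).card = 4 := by
  rw [card_insert_of_notMem (by simp [h1, h2, h3]),
    card_insert_of_notMem (by simp [h4, h5]),
    card_insert_of_notMem (by simp [h6]), card_singleton]

lemma geom {a b c : ZMod n} {f : Finset (ZMod n)} (hf3 : f.card = 3)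
    (hb : 0 < (b - a).val) (hbc : (b - a).val < (c - a).val)
    (hne : f ≠ {a, b, c}) (hnc : ¬ triCross n ({a, b, c} : Finset (ZMod n)) f) :
    (∀ t ∈ f, (t - a).val ≤ (b - a).val) ∨
    (∀ t ∈ f, (b - a).val ≤ (t - a).val ∧ (t - a).val ≤ (c - a).val) ∨
    (∀ t ∈ f, (c - a).val ≤ (t - a).val ∨ (t - a).val = 0) := by
  set β := (b - a).val with hβ
  set γ := (c - a).val with hγ
  have hγn : γ < n := ZMod.val_lt _
  have ha0 : (a - a).val = 0 := delta_self a
  have hab : a ≠ b := delta_ne a (by omega)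
  have hac : a ≠ c := delta_ne a (by omega)
  have hbcne : b ≠ c := delta_ne a (by omega)
  have hma : a ∈ ({a, b, c} : Finset (ZMod n)) := by simp
  have hmb : b ∈ ({a, b, c} : Finset (ZMod n)) := by simp
  have hmc : c ∈ ({a, b, c} : Finset (ZMod n)) := by simp
  -- H1
  have H1 : (∃ x ∈ f, 0 < (x - a).val ∧ (x - a).val < β) → ∀ y ∈ f, (y - a).val ≤ β := by
    rintro ⟨x, hxf, hx1, hx2⟩ y hyf
    by_contra hyb
    push_neg at hyb
    exact hnc ⟨a, hma, b, hmb, x, hxf, y, hyf,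
      card4 hab (delta_ne a (by omega)) (delta_ne a (by omega)) (delta_ne a (by omega))
        (delta_ne a (by omega)) (delta_ne a (by omega)),
      Or.inl ⟨⟨hx1, hx2⟩, fun h => by unfold between at h; omega⟩⟩
  -- H2
  have H2 : (∃ x ∈ f, β < (x - a).val ∧ (x - a).val < γ) →
      ∀ y ∈ f, β ≤ (y - a).val ∧ (y - a).val ≤ γ := by
    rintro ⟨x, hxf, hx1, hx2⟩ y hyf
    by_contra hyb
    push_neg at hyb
    have hyval : (y - a).val < β ∨ γ < (y - a).val := by
      rcases Nat.lt_or_ge (y - a).val β with h | h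
      · exact Or.inl h
      · exact Or.inr (hyb h)
    have hxn : (x - a).val < n := ZMod.val_lt _
    have hyn : (y - a).val < n := ZMod.val_lt _
    have hcb : (c - b).val = γ - β := by
      rw [delta_sub a, ← hβ, ← hγ, dmod hγn (by omega), if_pos (by omega)]
    have hxb : (x - b).val = (x - a).val - β := by
      rw [delta_sub a, ← hβ, dmod hxn (by omega), if_pos (by omega)]
    have hybv : (y - b).val = if β ≤ (y - a).val then (y - a).val - β else (y - a).val + n - β := by
      rw [delta_sub a, ← hβ, dmod hyn (by omega)]
    refine hnc ⟨b, hmb, c, hmc, x, hxf, y, hyf,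
      card4 hbcne (delta_ne a (by omega)) (delta_ne a (by omega)) (delta_ne a (by omega))
        (delta_ne a (by omega)) (delta_ne a (by omega)),
      Or.inl ⟨⟨?_, ?_⟩, fun h => ?_⟩⟩
    · rw [hxb]; omega
    · rw [hxb, hcb]; omega
    · unfold between at h
      rcases h with ⟨h1, h2⟩
      rw [hybv] at h1 h2
      rw [hcb] at h2
      split_ifs at h1 h2 <;> omega
  -- H3
  have H3 : (∃ x ∈ f, γ < (x - a).val) →
      ∀ y ∈ f, γ ≤ (y - a).val ∨ (y - a).val = 0 := by
    rintro ⟨x, hxf, hx1⟩ y hyf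
    by_contra hyb
    push_neg at hyb
    rcases hyb with ⟨hy1, hy2⟩
    have hy1' : (y - a).val < γ := hy1
    have hxn : (x - a).val < n := ZMod.val_lt _
    have hyn : (y - a).val < n := ZMod.val_lt _
    have hca : (a - c).val = n - γ := by
      rw [delta_sub a, ← hγ, ha0, dmod (by omega) hγn, if_neg (by omega)]
      omega
    have hxc : (x - c).val = (x - a).val - γ := by
      rw [delta_sub a, ← hγ, dmod hxn hγn, if_pos (by omega)]
    have hyc : (y - c).val = (y - a).val + n - γ := by
      rw [delta_sub a, ← hγ, dmod hyn hγn, if_neg (by omega)]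
    refine hnc ⟨c, hmc, a, hma, x, hxf, y, hyf,
      card4 (Ne.symm hac) (delta_ne a (by omega)) (delta_ne a (by omega))
        (delta_ne a (by omega)) (delta_ne a (by omega)) (delta_ne a (by omega)),
      Or.inl ⟨⟨?_, ?_⟩, fun h => ?_⟩⟩
    · rw [hxc]; omega
    · rw [hxc, hca]; omega
    · unfold between at h
      rcases h with ⟨h1, h2⟩
      rw [hyc] at h1 h2
      rw [hca] at h2
      omega
  by_cases h1 : ∃ x ∈ f, 0 < (x - a).val ∧ (x - a).val < β
  · exact Or.inl (H1 h1)
  by_cases h2 : ∃ x ∈ f, β < (x - a).val ∧ (x - a).val < γ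
  · exact Or.inr (Or.inl (H2 h2))
  by_cases h3 : ∃ x ∈ f, γ < (x - a).val
  · exact Or.inr (Or.inr (H3 h3))
  -- all elements are among a, b, c
  push_neg at h1 h2 h3
  exfalso
  apply hne
  apply Finset.eq_of_subset_of_card_le
  · intro t ht
    have ht1 := h1 t ht
    have ht2 := h2 t ht
    have ht3 := h3 t ht
    have : (t - a).val = 0 ∨ (t - a).val = β ∨ (t - a).val = γ := by omega
    rcases this with h | h | h
    · simp [delta_inj a (h.trans ha0.symm)]
    · simp [delta_inj a (h : (t-a).val = (b-a).val)]
    · simp [delta_inj a (h : (t-a).val = (c-a).val)]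
  · rw [hf3, card3 hab hac hbcne]
lemma common_region {a b c u v : ZMod n}
    (hb : 0 < (b - a).val) (hbc : (b - a).val < (c - a).val)
    (huv : u ≠ v)
    (h0 : ¬ between n u v a) (hB : ¬ between n u v b) (hC : ¬ between n u v c) :
    ((u - a).val ≤ (b - a).val ∧ (v - a).val ≤ (b - a).val) ∨
    ((b - a).val ≤ (u - a).val ∧ (u - a).val ≤ (c - a).val ∧
     (b - a).val ≤ (v - a).val ∧ (v - a).val ≤ (c - a).val) ∨
    (((c - a).val ≤ (u - a).val ∨ (u - a).val = 0) ∧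
     ((c - a).val ≤ (v - a).val ∨ (v - a).val = 0)) := by
  have hγn : (c - a).val < n := ZMod.val_lt _
  have hβn : (b - a).val < n := (hbc.trans hγn)
  have hpn : (u - a).val < n := ZMod.val_lt _
  have hqn : (v - a).val < n := ZMod.val_lt _
  have hpq : (u - a).val ≠ (v - a).val := fun h => huv (delta_inj a h)
  unfold between at h0 hB hC
  rw [delta_sub a u a, delta_sub a u v, delta_self, dmod (show 0 < n by omega) hpn,
    dmod hqn hpn] at h0
  rw [delta_sub a u b, delta_sub a u v, dmod hβn hpn, dmod hqn hpn] at hB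
  rw [delta_sub a u c, delta_sub a u v, dmod hγn hpn, dmod hqn hpn] at hC
  split_ifs at h0 hB hC <;> omega

/-- Non-crossing family of triples. -/
def NCF (n : ℕ) (F : Finset (Finset (ZMod n))) : Prop :=
  (∀ f ∈ F, f.card = 3) ∧ ∀ e ∈ F, ∀ f ∈ F, e ≠ f → ¬ triCross n e f

lemma exists_ordered_triple {e : Finset (ZMod n)} (he : e.card = 3) :
    ∃ a b c : ZMod n, 0 < (b - a).val ∧ (b - a).val < (c - a).val ∧ e = {a, b, c} := by
  obtain ⟨x, y, z, hxy, hxz, hyz, rfl⟩ := Finset.card_eq_three.mp he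
  have hy0 : 0 < (y - x).val := by
    rcases Nat.eq_zero_or_pos (y - x).val with h | h
    · exact absurd (delta_inj x (h.trans (delta_self x).symm)) hxy.symm
    · exact h
  have hz0 : 0 < (z - x).val := by
    rcases Nat.eq_zero_or_pos (z - x).val with h | h
    · exact absurd (delta_inj x (h.trans (delta_self x).symm)) hxz.symm
    · exact h
  have hne : (y - x).val ≠ (z - x).val := fun h => hyz (delta_inj x h)
  rcases Nat.lt_or_ge (y - x).val (z - x).val with h | h
  · exact ⟨x, y, z, hy0, h, rfl⟩
  · exact ⟨x, z, y, hz0, by omega, congrArg (insert x) (Finset.pair_comm y z)⟩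

lemma chord1 {a b : ZMod n} (hb : 0 < (b - a).val) {w : ZMod n}
    (hw : (w - a).val ≤ (b - a).val) : ¬ between n b a w := by
  have hβn : (b - a).val < n := ZMod.val_lt _
  have hwn : (w - a).val < n := ZMod.val_lt _
  unfold between
  rw [delta_sub a b a, delta_sub a b w, delta_self, dmod (show 0 < n by omega) hβn,
    dmod hwn hβn]
  split_ifs <;> omega

lemma chord2 {a b c : ZMod n} (hb : 0 < (b - a).val) (hbc : (b - a).val < (c - a).val)
    {w : ZMod n} (hw1 : (b - a).val ≤ (w - a).val) (hw2 : (w - a).val ≤ (c - a).val) :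
    ¬ between n c b w := by
  have hγn : (c - a).val < n := ZMod.val_lt _
  have hβn : (b - a).val < n := hbc.trans hγn
  have hwn : (w - a).val < n := ZMod.val_lt _
  unfold between
  rw [delta_sub a c b, delta_sub a c w, dmod hβn hγn, dmod hwn hγn]
  split_ifs <;> omega

lemma chord3 {a c : ZMod n} (hc : 0 < (c - a).val) {w : ZMod n}
    (hw : (c - a).val ≤ (w - a).val ∨ (w - a).val = 0) : ¬ between n a c w := by
  unfold between
  omega

lemma pc2_triple {a b c : ZMod n} {p : Finset (ZMod n)}
    (hsub : p ⊆ ({a, b, c} : Finset (ZMod n))) (hp2 : p.card = 2) :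
    p = {a, b} ∨ p = {b, c} ∨ p = {a, c} := by
  obtain ⟨x, y, hxy, rfl⟩ := Finset.card_eq_two.mp hp2
  have hx := hsub (by simp : x ∈ ({x, y} : Finset (ZMod n)))
  have hy := hsub (by simp : y ∈ ({x, y} : Finset (ZMod n)))
  simp only [Finset.mem_insert, Finset.mem_singleton] at hx hy
  rcases hx with rfl | rfl | rfl <;> rcases hy with rfl | rfl | rfl
  · exact absurd rfl hxy
  · exact Or.inl rfl
  · exact Or.inr (Or.inr rfl)
  · exact Or.inl (Finset.pair_comm _ _)
  · exact absurd rfl hxy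
  · exact Or.inr (Or.inl rfl)
  · exact Or.inr (Or.inr (Finset.pair_comm _ _))
  · exact Or.inr (Or.inl (Finset.pair_comm _ _))
  · exact absurd rfl hxy

/-- The main decomposition of a non-crossing family along one of its triangles. -/
lemma decomp {A : Finset (ZMod n)} {F : Finset (Finset (ZMod n))}
    (hNC : NCF n F) (hFA : ∀ f ∈ F, f ⊆ A)
    {e : Finset (ZMod n)} (he : e ∈ F) {a b c : ZMod n}
    (hb : 0 < (b - a).val) (hbc : (b - a).val < (c - a).val) (heq : e = {a, b, c}) :
    F = insert e ((F.filter (fun f => ∀ t ∈ f, (t - a).val ≤ (b - a).val)) ∪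
        (F.filter (fun f => ∀ t ∈ f, (b - a).val ≤ (t - a).val ∧ (t - a).val ≤ (c - a).val)) ∪
        (F.filter (fun f => ∀ t ∈ f, (c - a).val ≤ (t - a).val ∨ (t - a).val = 0))) ∧
    e ∉ ((F.filter (fun f => ∀ t ∈ f, (t - a).val ≤ (b - a).val)) ∪
        (F.filter (fun f => ∀ t ∈ f, (b - a).val ≤ (t - a).val ∧ (t - a).val ≤ (c - a).val)) ∪
        (F.filter (fun f => ∀ t ∈ f, (c - a).val ≤ (t - a).val ∨ (t - a).val = 0))) ∧
    Disjoint (F.filter (fun f => ∀ t ∈ f, (t - a).val ≤ (b - a).val))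
      (F.filter (fun f => ∀ t ∈ f, (b - a).val ≤ (t - a).val ∧ (t - a).val ≤ (c - a).val)) ∧
    Disjoint (F.filter (fun f => ∀ t ∈ f, (t - a).val ≤ (b - a).val))
      (F.filter (fun f => ∀ t ∈ f, (c - a).val ≤ (t - a).val ∨ (t - a).val = 0)) ∧
    Disjoint (F.filter (fun f => ∀ t ∈ f, (b - a).val ≤ (t - a).val ∧ (t - a).val ≤ (c - a).val))
      (F.filter (fun f => ∀ t ∈ f, (c - a).val ≤ (t - a).val ∨ (t - a).val = 0)) ∧
    (A.filter (fun t => (t - a).val ≤ (b - a).val)).card +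
      (A.filter (fun t => (b - a).val ≤ (t - a).val ∧ (t - a).val ≤ (c - a).val)).card +
      (A.filter (fun t => (c - a).val ≤ (t - a).val ∨ (t - a).val = 0)).card = A.card + 3 ∧
    2 ≤ (A.filter (fun t => (t - a).val ≤ (b - a).val)).card ∧
    2 ≤ (A.filter (fun t => (b - a).val ≤ (t - a).val ∧ (t - a).val ≤ (c - a).val)).card ∧
    2 ≤ (A.filter (fun t => (c - a).val ≤ (t - a).val ∨ (t - a).val = 0)).card ∧
    (A.filter (fun t => (t - a).val ≤ (b - a).val)).card < A.card ∧
    (A.filter (fun t => (b - a).val ≤ (t - a).val ∧ (t - a).val ≤ (c - a).val)).card < A.card ∧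
    (A.filter (fun t => (c - a).val ≤ (t - a).val ∨ (t - a).val = 0)).card < A.card := by
  have heA : e ⊆ A := hFA e he
  have haA : a ∈ A := heA (heq ▸ (by simp))
  have hbA : b ∈ A := heA (heq ▸ (by simp))
  have hcA : c ∈ A := heA (heq ▸ (by simp))
  have ha0 : (a - a).val = 0 := delta_self a
  have hab : a ≠ b := delta_ne a (by omega)
  have hac : a ≠ c := delta_ne a (by omega)
  have hbcne : b ≠ c := delta_ne a (by omega)
  -- e is in no region family
  have hnot : e ∉ ((F.filter (fun f => ∀ t ∈ f, (t - a).val ≤ (b - a).val)) ∪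
      (F.filter (fun f => ∀ t ∈ f, (b - a).val ≤ (t - a).val ∧ (t - a).val ≤ (c - a).val)) ∪
      (F.filter (fun f => ∀ t ∈ f, (c - a).val ≤ (t - a).val ∨ (t - a).val = 0))) := by
    simp only [Finset.mem_union, Finset.mem_filter, not_or]
    refine ⟨⟨fun h => ?_, fun h => ?_⟩, fun h => ?_⟩
    · have := h.2 c (heq ▸ (by simp)); omega
    · have := h.2 a (heq ▸ (by simp)); omega
    · have := h.2 b (heq ▸ (by simp)); omega
  refine ⟨?_, hnot, ?_, ?_, ?_, ?_, ?_, ?_, ?_, ?_, ?_, ?_⟩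
  · -- decomposition equality
    apply Finset.Subset.antisymm
    · intro f hf
      by_cases hfe : f = e
      · exact hfe ▸ Finset.mem_insert_self _ _
      · have hgeom := geom (hNC.1 f hf) hb hbc (fun h => hfe (h ▸ heq ▸ rfl))
          (heq ▸ hNC.2 e he f hf (Ne.symm hfe))
        apply Finset.mem_insert_of_mem
        rcases hgeom with h | h | h
        · exact Finset.mem_union_left _ (Finset.mem_union_left _ (Finset.mem_filter.mpr ⟨hf, h⟩))
        · exact Finset.mem_union_left _ (Finset.mem_union_right _ (Finset.mem_filter.mpr ⟨hf, h⟩))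
        · exact Finset.mem_union_right _ (Finset.mem_filter.mpr ⟨hf, h⟩)
    · intro f hf
      rcases Finset.mem_insert.mp hf with rfl | hf
      · exact he
      · rcases Finset.mem_union.mp hf with hf | hf
        · rcases Finset.mem_union.mp hf with hf | hf <;> exact (Finset.mem_filter.mp hf).1
        · exact (Finset.mem_filter.mp hf).1
  · -- disjoint 1 2
    rw [Finset.disjoint_left]
    intro f h1 h2
    have hf3 := hNC.1 f (Finset.mem_filter.mp h1).1
    have hsub : f ⊆ {b} := fun t ht => by
      have p1 := (Finset.mem_filter.mp h1).2 t ht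
      have p2 := (Finset.mem_filter.mp h2).2 t ht
      simp [delta_inj a (show (t - a).val = (b - a).val by omega)]
    have := Finset.card_le_card hsub
    simp at this; omega
  · -- disjoint 1 3
    rw [Finset.disjoint_left]
    intro f h1 h2
    have hf3 := hNC.1 f (Finset.mem_filter.mp h1).1
    have hsub : f ⊆ {a} := fun t ht => by
      have p1 := (Finset.mem_filter.mp h1).2 t ht
      have p2 := (Finset.mem_filter.mp h2).2 t ht
      have : (t - a).val = 0 := by omega
      simp [delta_inj a (this.trans ha0.symm)]
    have := Finset.card_le_card hsub
    simp at this; omega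
  · -- disjoint 2 3
    rw [Finset.disjoint_left]
    intro f h1 h2
    have hf3 := hNC.1 f (Finset.mem_filter.mp h1).1
    have hsub : f ⊆ {c} := fun t ht => by
      have p1 := (Finset.mem_filter.mp h1).2 t ht
      have p2 := (Finset.mem_filter.mp h2).2 t ht
      simp [delta_inj a (show (t - a).val = (c - a).val by omega)]
    have := Finset.card_le_card hsub
    simp at this; omega
  · -- card sum
    have hmark : (A.filter (fun t => (t - a).val = 0 ∨ (t - a).val = (b - a).val ∨
        (t - a).val = (c - a).val)).card = 3 := by
      have hset : A.filter (fun t => (t - a).val = 0 ∨ (t - a).val = (b - a).val ∨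
          (t - a).val = (c - a).val) = {a, b, c} := by
        ext t
        simp only [Finset.mem_filter, Finset.mem_insert, Finset.mem_singleton]
        constructor
        · rintro ⟨htA, h | h | h⟩
          · exact Or.inl (delta_inj a (h.trans ha0.symm))
          · exact Or.inr (Or.inl (delta_inj a h))
          · exact Or.inr (Or.inr (delta_inj a h))
        · rintro (rfl | rfl | rfl)
          · exact ⟨haA, Or.inl ha0⟩
          · exact ⟨hbA, Or.inr (Or.inl rfl)⟩
          · exact ⟨hcA, Or.inr (Or.inr rfl)⟩
      rw [hset, card3 hab hac hbcne]
    rw [Finset.card_filter, Finset.card_filter, Finset.card_filter]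
    rw [← Finset.sum_add_distrib, ← Finset.sum_add_distrib]
    have : ∀ t ∈ A, ((if (t - a).val ≤ (b - a).val then 1 else 0) +
        (if (b - a).val ≤ (t - a).val ∧ (t - a).val ≤ (c - a).val then 1 else 0) +
        (if (c - a).val ≤ (t - a).val ∨ (t - a).val = 0 then 1 else 0) : ℕ) =
        1 + (if (t - a).val = 0 ∨ (t - a).val = (b - a).val ∨ (t - a).val = (c - a).val
          then 1 else 0) := by
      intro t ht
      have htn : (t - a).val < n := ZMod.val_lt _
      have hγn : (c - a).val < n := ZMod.val_lt _
      split_ifs <;> omega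
    rw [Finset.sum_congr rfl this, Finset.sum_add_distrib, ← Finset.card_filter, hmark]
    simp [Finset.sum_const, add_comm]
  · refine le_trans (by rw [Finset.card_pair hab]) (Finset.card_le_card ?_)
    intro t ht
    rcases Finset.mem_insert.mp ht with rfl | ht
    · exact Finset.mem_filter.mpr ⟨haA, by omega⟩
    · rw [Finset.mem_singleton] at ht
      subst ht
      exact Finset.mem_filter.mpr ⟨hbA, le_refl _⟩
  · refine le_trans (by rw [Finset.card_pair hbcne]) (Finset.card_le_card ?_)
    intro t ht
    rcases Finset.mem_insert.mp ht with rfl | ht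
    · exact Finset.mem_filter.mpr ⟨hbA, by omega⟩
    · rw [Finset.mem_singleton] at ht
      subst ht
      exact Finset.mem_filter.mpr ⟨hcA, by omega⟩
  · refine le_trans (by rw [Finset.card_pair hac.symm]) (Finset.card_le_card ?_)
    intro t ht
    rcases Finset.mem_insert.mp ht with rfl | ht
    · exact Finset.mem_filter.mpr ⟨hcA, by omega⟩
    · rw [Finset.mem_singleton] at ht
      subst ht
      exact Finset.mem_filter.mpr ⟨haA, by omega⟩
  · have hsub : A.filter (fun t => (t - a).val ≤ (b - a).val) ⊆ A.erase c := by
      intro t ht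
      have h := Finset.mem_filter.mp ht
      have h2 := h.2
      exact Finset.mem_erase.mpr ⟨delta_ne a (by omega), h.1⟩
    have hle := Finset.card_le_card hsub
    rw [Finset.card_erase_of_mem hcA] at hle
    have hposA : 0 < A.card := Finset.card_pos.mpr ⟨a, haA⟩
    omega
  · have hsub : A.filter (fun t => (b - a).val ≤ (t - a).val ∧ (t - a).val ≤ (c - a).val)
        ⊆ A.erase a := by
      intro t ht
      have h := Finset.mem_filter.mp ht
      have h2 := h.2
      exact Finset.mem_erase.mpr ⟨delta_ne a (by omega), h.1⟩
    have hle := Finset.card_le_card hsub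
    rw [Finset.card_erase_of_mem haA] at hle
    have hposA : 0 < A.card := Finset.card_pos.mpr ⟨a, haA⟩
    omega
  · have hsub : A.filter (fun t => (c - a).val ≤ (t - a).val ∨ (t - a).val = 0)
        ⊆ A.erase b := by
      intro t ht
      have h := Finset.mem_filter.mp ht
      have h2 := h.2
      exact Finset.mem_erase.mpr ⟨delta_ne a (by omega), h.1⟩
    have hle := Finset.card_le_card hsub
    rw [Finset.card_erase_of_mem hbA] at hle
    have hposA : 0 < A.card := Finset.card_pos.mpr ⟨a, haA⟩
    omega

lemma bound_aux : ∀ (k : ℕ) (A : Finset (ZMod n)) (F : Finset (Finset (ZMod n))),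
    A.card ≤ k → NCF n F → (∀ f ∈ F, f ⊆ A) → F.card ≤ A.card - 2 := by
  intro k
  induction k using Nat.strong_induction_on with
  | _ k IH =>
    intro A F hAk hNC hFA
    rcases F.eq_empty_or_nonempty with rfl | ⟨e, he⟩
    · simp
    obtain ⟨a, b, c, hb, hbc, heq⟩ := exists_ordered_triple (hNC.1 e he)
    obtain ⟨hdec, hnot, d12, d13, d23, hAsum, hA1, hA2, hA3, hlt1, hlt2, hlt3⟩ :=
      decomp hNC hFA he hb hbc heq
    set F1 := F.filter (fun f => ∀ t ∈ f, (t - a).val ≤ (b - a).val) with hF1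
    set F2 := F.filter (fun f => ∀ t ∈ f, (b - a).val ≤ (t - a).val ∧ (t - a).val ≤ (c - a).val)
      with hF2
    set F3 := F.filter (fun f => ∀ t ∈ f, (c - a).val ≤ (t - a).val ∨ (t - a).val = 0) with hF3
    set A1 := A.filter (fun t => (t - a).val ≤ (b - a).val) with hA1d
    set A2 := A.filter (fun t => (b - a).val ≤ (t - a).val ∧ (t - a).val ≤ (c - a).val) with hA2d
    set A3 := A.filter (fun t => (c - a).val ≤ (t - a).val ∨ (t - a).val = 0) with hA3d
    have hsubNC : ∀ G : Finset (Finset (ZMod n)), G ⊆ F → NCF n G := fun G hG =>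
      ⟨fun f hf => hNC.1 f (hG hf), fun e1 h1 e2 h2 hne => hNC.2 e1 (hG h1) e2 (hG h2) hne⟩
    have hc1 : F1.card ≤ A1.card - 2 :=
      IH A1.card (lt_of_lt_of_le hlt1 hAk) A1 F1 le_rfl (hsubNC F1 (Finset.filter_subset _ _))
        (fun f hf t ht => Finset.mem_filter.mpr
          ⟨hFA f (Finset.mem_filter.mp hf).1 ht, (Finset.mem_filter.mp hf).2 t ht⟩)
    have hc2 : F2.card ≤ A2.card - 2 :=
      IH A2.card (lt_of_lt_of_le hlt2 hAk) A2 F2 le_rfl (hsubNC F2 (Finset.filter_subset _ _))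
        (fun f hf t ht => Finset.mem_filter.mpr
          ⟨hFA f (Finset.mem_filter.mp hf).1 ht, (Finset.mem_filter.mp hf).2 t ht⟩)
    have hc3 : F3.card ≤ A3.card - 2 :=
      IH A3.card (lt_of_lt_of_le hlt3 hAk) A3 F3 le_rfl (hsubNC F3 (Finset.filter_subset _ _))
        (fun f hf t ht => Finset.mem_filter.mpr
          ⟨hFA f (Finset.mem_filter.mp hf).1 ht, (Finset.mem_filter.mp hf).2 t ht⟩)
    have hFcard : F.card ≤ 1 + (F1.card + F2.card + F3.card) := by
      calc F.card = (insert e (F1 ∪ F2 ∪ F3)).card := by rw [← hdec]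
        _ ≤ (F1 ∪ F2 ∪ F3).card + 1 := Finset.card_insert_le _ _
        _ ≤ (F1 ∪ F2).card + F3.card + 1 := by
            have := Finset.card_union_le (F1 ∪ F2) F3; omega
        _ ≤ F1.card + F2.card + F3.card + 1 := by
            have := Finset.card_union_le F1 F2; omega
        _ = 1 + (F1.card + F2.card + F3.card) := by omega
    omega

lemma count_aux : ∀ (k : ℕ) (A : Finset (ZMod n)) (F : Finset (Finset (ZMod n))),
    A.card ≤ k → NCF n F → (∀ f ∈ F, f ⊆ A) → F.Nonempty → F.card + 2 = A.card →
    (∀ u v : ZMod n, u ∈ A → v ∈ A → u ≠ v → (∀ w ∈ A, ¬ between n u v w) →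
      ({u, v} : Finset (ZMod n)) ∈ F.sup (fun f => f.powersetCard 2)) ∧
    (F.sup (fun f => f.powersetCard 2)).card + 3 = 2 * A.card := by
  intro k
  induction k using Nat.strong_induction_on with
  | _ k IH =>
    intro A F hAk hNC hFA hFne hFcard
    obtain ⟨e, he⟩ := hFne
    obtain ⟨a, b, c, hb, hbc, heq⟩ := exists_ordered_triple (hNC.1 e he)
    obtain ⟨hdec, hnot, d12, d13, d23, hAsum, hA1ge, hA2ge, hA3ge, hlt1, hlt2, hlt3⟩ :=
      decomp hNC hFA he hb hbc heq
    set F1 := F.filter (fun f => ∀ t ∈ f, (t - a).val ≤ (b - a).val) with hF1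
    set F2 := F.filter (fun f => ∀ t ∈ f, (b - a).val ≤ (t - a).val ∧ (t - a).val ≤ (c - a).val)
      with hF2
    set F3 := F.filter (fun f => ∀ t ∈ f, (c - a).val ≤ (t - a).val ∨ (t - a).val = 0) with hF3
    set A1 := A.filter (fun t => (t - a).val ≤ (b - a).val) with hA1d
    set A2 := A.filter (fun t => (b - a).val ≤ (t - a).val ∧ (t - a).val ≤ (c - a).val) with hA2d
    set A3 := A.filter (fun t => (c - a).val ≤ (t - a).val ∨ (t - a).val = 0) with hA3d
    have heA : e ⊆ A := hFA e he
    have haA : a ∈ A := heA (heq ▸ (by simp))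
    have hbA : b ∈ A := heA (heq ▸ (by simp))
    have hcA : c ∈ A := heA (heq ▸ (by simp))
    have ha0 : (a - a).val = 0 := delta_self a
    have hab : a ≠ b := delta_ne a (by omega)
    have hac : a ≠ c := delta_ne a (by omega)
    have hbcne : b ≠ c := delta_ne a (by omega)
    have haA1 : a ∈ A1 := Finset.mem_filter.mpr ⟨haA, by omega⟩
    have hbA1 : b ∈ A1 := Finset.mem_filter.mpr ⟨hbA, le_refl _⟩
    have hbA2 : b ∈ A2 := Finset.mem_filter.mpr ⟨hbA, by omega⟩
    have hcA2 : c ∈ A2 := Finset.mem_filter.mpr ⟨hcA, by omega⟩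
    have hcA3 : c ∈ A3 := Finset.mem_filter.mpr ⟨hcA, by omega⟩
    have haA3 : a ∈ A3 := Finset.mem_filter.mpr ⟨haA, by omega⟩
    have hsubNC : ∀ G : Finset (Finset (ZMod n)), G ⊆ F → NCF n G := fun G hG =>
      ⟨fun f hf => hNC.1 f (hG hf), fun e1 h1 e2 h2 hne => hNC.2 e1 (hG h1) e2 (hG h2) hne⟩
    have hF1A : ∀ f ∈ F1, f ⊆ A1 := fun f hf t ht => Finset.mem_filter.mpr
      ⟨hFA f (Finset.mem_filter.mp hf).1 ht, (Finset.mem_filter.mp hf).2 t ht⟩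
    have hF2A : ∀ f ∈ F2, f ⊆ A2 := fun f hf t ht => Finset.mem_filter.mpr
      ⟨hFA f (Finset.mem_filter.mp hf).1 ht, (Finset.mem_filter.mp hf).2 t ht⟩
    have hF3A : ∀ f ∈ F3, f ⊆ A3 := fun f hf t ht => Finset.mem_filter.mpr
      ⟨hFA f (Finset.mem_filter.mp hf).1 ht, (Finset.mem_filter.mp hf).2 t ht⟩
    have hc1 : F1.card ≤ A1.card - 2 :=
      bound_aux A1.card A1 F1 le_rfl (hsubNC F1 (Finset.filter_subset _ _)) hF1A
    have hc2 : F2.card ≤ A2.card - 2 :=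
      bound_aux A2.card A2 F2 le_rfl (hsubNC F2 (Finset.filter_subset _ _)) hF2A
    have hc3 : F3.card ≤ A3.card - 2 :=
      bound_aux A3.card A3 F3 le_rfl (hsubNC F3 (Finset.filter_subset _ _)) hF3A
    have hFeq : F.card = 1 + (F1.card + F2.card + F3.card) := by
      rw [hdec, Finset.card_insert_of_notMem hnot,
        Finset.card_union_of_disjoint (Finset.disjoint_union_left.mpr ⟨d13, d23⟩),
        Finset.card_union_of_disjoint d12]
      omega
    have hx1 : F1.card + 2 = A1.card := by omega
    have hx2 : F2.card + 2 = A2.card := by omega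
    have hx3 : F3.card + 2 = A3.card := by omega
    -- the three shadow pieces
    have hS1 : ∃ S : Finset (Finset (ZMod n)),
        S.card + 3 = 2 * A1.card ∧
        F1.sup (fun f => f.powersetCard 2) ⊆ S ∧
        S ⊆ F.sup (fun f => f.powersetCard 2) ∧
        (∀ p ∈ S, (∀ t ∈ p, (t - a).val ≤ (b - a).val) ∧ p.card = 2) ∧
        (∀ u v : ZMod n, u ∈ A1 → v ∈ A1 → u ≠ v → (∀ w ∈ A1, ¬ between n u v w) →
          ({u, v} : Finset (ZMod n)) ∈ S) := by
      rcases Nat.lt_or_ge A1.card 3 with hsmall | hbig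
      · have hA1eq : A1 = {a, b} := by
          apply (Finset.eq_of_subset_of_card_le (by
            intro t ht
            rcases Finset.mem_insert.mp ht with rfl | ht
            · exact haA1
            · rw [Finset.mem_singleton] at ht; subst ht; exact hbA1) (by
            rw [Finset.card_pair hab]; omega)).symm
        refine ⟨{({a, b} : Finset (ZMod n))}, ?_, ?_, ?_, ?_, ?_⟩
        · rw [Finset.card_singleton]; omega
        · have : F1 = ∅ := Finset.card_eq_zero.mp (by omega)
          rw [this]; simp
        · intro p hp
          rw [Finset.mem_singleton] at hp
          subst hp
          exact Finset.mem_sup.mpr ⟨e, he, Finset.mem_powersetCard.mpr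
            ⟨by rw [heq]; intro t ht; rcases Finset.mem_insert.mp ht with rfl | ht
                · simp
                · rw [Finset.mem_singleton] at ht; subst ht; simp,
             Finset.card_pair hab⟩⟩
        · intro p hp
          rw [Finset.mem_singleton] at hp
          subst hp
          refine ⟨?_, Finset.card_pair hab⟩
          intro t ht
          rcases Finset.mem_insert.mp ht with rfl | ht
          · omega
          · rw [Finset.mem_singleton] at ht; subst ht; exact le_refl _
        · intro u v hu hv huv _
          rw [hA1eq] at hu hv
          rcases Finset.mem_insert.mp hu with rfl | hu
          · rcases Finset.mem_insert.mp hv with rfl | hv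
            · exact absurd rfl huv
            · rw [Finset.mem_singleton] at hv; subst hv; simp
          · rw [Finset.mem_singleton] at hu; subst hu
            rcases Finset.mem_insert.mp hv with rfl | hv
            · rw [Finset.pair_comm]; simp
            · rw [Finset.mem_singleton] at hv; subst hv; exact absurd rfl huv
      · have hF1ne : F1.Nonempty := Finset.card_pos.mp (by omega)
        obtain ⟨ih1, ih2⟩ := IH A1.card (lt_of_lt_of_le hlt1 hAk) A1 F1 le_rfl
          (hsubNC F1 (Finset.filter_subset _ _)) hF1A hF1ne hx1
        refine ⟨F1.sup (fun f => f.powersetCard 2), ih2, Finset.Subset.refl _,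
          Finset.sup_mono (Finset.filter_subset _ _), ?_, ih1⟩
        intro p hp
        obtain ⟨f, hf, hpf⟩ := Finset.mem_sup.mp hp
        obtain ⟨hpsub, hp2⟩ := Finset.mem_powersetCard.mp hpf
        exact ⟨fun t ht => (Finset.mem_filter.mp hf).2 t (hpsub ht), hp2⟩
    have hS2 : ∃ S : Finset (Finset (ZMod n)),
        S.card + 3 = 2 * A2.card ∧
        F2.sup (fun f => f.powersetCard 2) ⊆ S ∧
        S ⊆ F.sup (fun f => f.powersetCard 2) ∧
        (∀ p ∈ S, (∀ t ∈ p, (b - a).val ≤ (t - a).val ∧ (t - a).val ≤ (c - a).val) ∧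
          p.card = 2) ∧
        (∀ u v : ZMod n, u ∈ A2 → v ∈ A2 → u ≠ v → (∀ w ∈ A2, ¬ between n u v w) →
          ({u, v} : Finset (ZMod n)) ∈ S) := by
      rcases Nat.lt_or_ge A2.card 3 with hsmall | hbig
      · have hA2eq : A2 = {b, c} := by
          apply (Finset.eq_of_subset_of_card_le (by
            intro t ht
            rcases Finset.mem_insert.mp ht with rfl | ht
            · exact hbA2
            · rw [Finset.mem_singleton] at ht; subst ht; exact hcA2) (by
            rw [Finset.card_pair hbcne]; omega)).symm
        refine ⟨{({b, c} : Finset (ZMod n))}, ?_, ?_, ?_, ?_, ?_⟩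
        · rw [Finset.card_singleton]; omega
        · have : F2 = ∅ := Finset.card_eq_zero.mp (by omega)
          rw [this]; simp
        · intro p hp
          rw [Finset.mem_singleton] at hp
          subst hp
          exact Finset.mem_sup.mpr ⟨e, he, Finset.mem_powersetCard.mpr
            ⟨by rw [heq]; intro t ht; rcases Finset.mem_insert.mp ht with rfl | ht
                · simp
                · rw [Finset.mem_singleton] at ht; subst ht; simp,
             Finset.card_pair hbcne⟩⟩
        · intro p hp
          rw [Finset.mem_singleton] at hp
          subst hp
          refine ⟨?_, Finset.card_pair hbcne⟩
          intro t ht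
          rcases Finset.mem_insert.mp ht with rfl | ht
          · omega
          · rw [Finset.mem_singleton] at ht; subst ht; omega
        · intro u v hu hv huv _
          rw [hA2eq] at hu hv
          rcases Finset.mem_insert.mp hu with rfl | hu
          · rcases Finset.mem_insert.mp hv with rfl | hv
            · exact absurd rfl huv
            · rw [Finset.mem_singleton] at hv; subst hv; simp
          · rw [Finset.mem_singleton] at hu; subst hu
            rcases Finset.mem_insert.mp hv with rfl | hv
            · rw [Finset.pair_comm]; simp
            · rw [Finset.mem_singleton] at hv; subst hv; exact absurd rfl huv
      · have hF2ne : F2.Nonempty := Finset.card_pos.mp (by omega)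
        obtain ⟨ih1, ih2⟩ := IH A2.card (lt_of_lt_of_le hlt2 hAk) A2 F2 le_rfl
          (hsubNC F2 (Finset.filter_subset _ _)) hF2A hF2ne hx2
        refine ⟨F2.sup (fun f => f.powersetCard 2), ih2, Finset.Subset.refl _,
          Finset.sup_mono (Finset.filter_subset _ _), ?_, ih1⟩
        intro p hp
        obtain ⟨f, hf, hpf⟩ := Finset.mem_sup.mp hp
        obtain ⟨hpsub, hp2⟩ := Finset.mem_powersetCard.mp hpf
        exact ⟨fun t ht => (Finset.mem_filter.mp hf).2 t (hpsub ht), hp2⟩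
    have hS3 : ∃ S : Finset (Finset (ZMod n)),
        S.card + 3 = 2 * A3.card ∧
        F3.sup (fun f => f.powersetCard 2) ⊆ S ∧
        S ⊆ F.sup (fun f => f.powersetCard 2) ∧
        (∀ p ∈ S, (∀ t ∈ p, (c - a).val ≤ (t - a).val ∨ (t - a).val = 0) ∧ p.card = 2) ∧
        (∀ u v : ZMod n, u ∈ A3 → v ∈ A3 → u ≠ v → (∀ w ∈ A3, ¬ between n u v w) →
          ({u, v} : Finset (ZMod n)) ∈ S) := by
      rcases Nat.lt_or_ge A3.card 3 with hsmall | hbig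
      · have hA3eq : A3 = {c, a} := by
          apply (Finset.eq_of_subset_of_card_le (by
            intro t ht
            rcases Finset.mem_insert.mp ht with rfl | ht
            · exact hcA3
            · rw [Finset.mem_singleton] at ht; subst ht; exact haA3) (by
            rw [Finset.card_pair hac.symm]; omega)).symm
        refine ⟨{({c, a} : Finset (ZMod n))}, ?_, ?_, ?_, ?_, ?_⟩
        · rw [Finset.card_singleton]; omega
        · have : F3 = ∅ := Finset.card_eq_zero.mp (by omega)
          rw [this]; simp
        · intro p hp
          rw [Finset.mem_singleton] at hp
          subst hp
          exact Finset.mem_sup.mpr ⟨e, he, Finset.mem_powersetCard.mpr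
            ⟨by rw [heq]; intro t ht; rcases Finset.mem_insert.mp ht with rfl | ht
                · simp
                · rw [Finset.mem_singleton] at ht; subst ht; simp,
             Finset.card_pair hac.symm⟩⟩
        · intro p hp
          rw [Finset.mem_singleton] at hp
          subst hp
          refine ⟨?_, Finset.card_pair hac.symm⟩
          intro t ht
          rcases Finset.mem_insert.mp ht with rfl | ht
          · omega
          · rw [Finset.mem_singleton] at ht; subst ht; omega
        · intro u v hu hv huv _
          rw [hA3eq] at hu hv
          rcases Finset.mem_insert.mp hu with rfl | hu
          · rcases Finset.mem_insert.mp hv with rfl | hv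
            · exact absurd rfl huv
            · rw [Finset.mem_singleton] at hv; subst hv; simp
          · rw [Finset.mem_singleton] at hu; subst hu
            rcases Finset.mem_insert.mp hv with rfl | hv
            · rw [Finset.pair_comm]; simp
            · rw [Finset.mem_singleton] at hv; subst hv; exact absurd rfl huv
      · have hF3ne : F3.Nonempty := Finset.card_pos.mp (by omega)
        obtain ⟨ih1, ih2⟩ := IH A3.card (lt_of_lt_of_le hlt3 hAk) A3 F3 le_rfl
          (hsubNC F3 (Finset.filter_subset _ _)) hF3A hF3ne hx3
        refine ⟨F3.sup (fun f => f.powersetCard 2), ih2, Finset.Subset.refl _,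
          Finset.sup_mono (Finset.filter_subset _ _), ?_, ih1⟩
        intro p hp
        obtain ⟨f, hf, hpf⟩ := Finset.mem_sup.mp hp
        obtain ⟨hpsub, hp2⟩ := Finset.mem_powersetCard.mp hpf
        exact ⟨fun t ht => (Finset.mem_filter.mp hf).2 t (hpsub ht), hp2⟩
    obtain ⟨S1, hS1card, hS1sub, hS1sup, hS1el, hS1bnd⟩ := hS1
    obtain ⟨S2, hS2card, hS2sub, hS2sup, hS2el, hS2bnd⟩ := hS2
    obtain ⟨S3, hS3card, hS3sub, hS3sup, hS3el, hS3bnd⟩ := hS3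
    -- chord memberships
    have hch1 : ({a, b} : Finset (ZMod n)) ∈ S1 := by
      have := hS1bnd b a hbA1 haA1 hab.symm (fun w hw =>
        chord1 hb ((Finset.mem_filter.mp hw).2))
      rwa [Finset.pair_comm] at this
    have hch2 : ({b, c} : Finset (ZMod n)) ∈ S2 := by
      have := hS2bnd c b hcA2 hbA2 hbcne.symm (fun w hw =>
        chord2 hb hbc ((Finset.mem_filter.mp hw).2).1 ((Finset.mem_filter.mp hw).2).2)
      rwa [Finset.pair_comm] at this
    have hch3 : ({a, c} : Finset (ZMod n)) ∈ S3 := by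
      exact hS3bnd a c haA3 hcA3 hac (fun w hw =>
        chord3 (by omega) ((Finset.mem_filter.mp hw).2))
    -- the shadow equals the union
    have hsupeq : F.sup (fun f => f.powersetCard 2) = S1 ∪ S2 ∪ S3 := by
      apply Finset.Subset.antisymm
      · intro p hp
        obtain ⟨f, hf, hpf⟩ := Finset.mem_sup.mp hp
        obtain ⟨hpsub, hp2⟩ := Finset.mem_powersetCard.mp hpf
        rw [hdec] at hf
        rcases Finset.mem_insert.mp hf with rfl | hf
        · rw [heq] at hpsub
          rcases pc2_triple hpsub hp2 with rfl | rfl | rfl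
          · exact Finset.mem_union_left _ (Finset.mem_union_left _ hch1)
          · exact Finset.mem_union_left _ (Finset.mem_union_right _ hch2)
          · exact Finset.mem_union_right _ hch3
        · rcases Finset.mem_union.mp hf with hf | hf
          · rcases Finset.mem_union.mp hf with hf | hf
            · exact Finset.mem_union_left _ (Finset.mem_union_left _ (hS1sub
                (Finset.mem_sup.mpr ⟨f, hf, Finset.mem_powersetCard.mpr ⟨hpsub, hp2⟩⟩)))
            · exact Finset.mem_union_left _ (Finset.mem_union_right _ (hS2sub
                (Finset.mem_sup.mpr ⟨f, hf, Finset.mem_powersetCard.mpr ⟨hpsub, hp2⟩⟩)))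
          · exact Finset.mem_union_right _ (hS3sub
              (Finset.mem_sup.mpr ⟨f, hf, Finset.mem_powersetCard.mpr ⟨hpsub, hp2⟩⟩))
      · intro p hp
        rcases Finset.mem_union.mp hp with hp | hp
        · rcases Finset.mem_union.mp hp with hp | hp
          · exact hS1sup hp
          · exact hS2sup hp
        · exact hS3sup hp
    have hd12 : Disjoint S1 S2 := by
      rw [Finset.disjoint_left]
      intro p h1 h2
      obtain ⟨he1, hpc1⟩ := hS1el p h1
      obtain ⟨he2, _⟩ := hS2el p h2
      have hsub : p ⊆ {b} := fun t ht => by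
        have q1 := he1 t ht
        have q2 := he2 t ht
        simp [delta_inj a (show (t - a).val = (b - a).val by omega)]
      have := Finset.card_le_card hsub
      simp at this; omega
    have hd13 : Disjoint S1 S3 := by
      rw [Finset.disjoint_left]
      intro p h1 h2
      obtain ⟨he1, hpc1⟩ := hS1el p h1
      obtain ⟨he2, _⟩ := hS3el p h2
      have hsub : p ⊆ {a} := fun t ht => by
        have q1 := he1 t ht
        have q2 := he2 t ht
        have : (t - a).val = 0 := by omega
        simp [delta_inj a (this.trans ha0.symm)]
      have := Finset.card_le_card hsub
      simp at this; omega
    have hd23 : Disjoint S2 S3 := by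
      rw [Finset.disjoint_left]
      intro p h1 h2
      obtain ⟨he1, hpc1⟩ := hS2el p h1
      obtain ⟨he2, _⟩ := hS3el p h2
      have hsub : p ⊆ {c} := fun t ht => by
        have q1 := he1 t ht
        have q2 := he2 t ht
        simp [delta_inj a (show (t - a).val = (c - a).val by omega)]
      have := Finset.card_le_card hsub
      simp at this; omega
    constructor
    · intro u v hu hv huv hbw
      rcases common_region hb hbc huv (hbw a haA) (hbw b hbA) (hbw c hcA) with h | h | h
      · exact hS1sup (hS1bnd u v (Finset.mem_filter.mpr ⟨hu, h.1⟩)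
          (Finset.mem_filter.mpr ⟨hv, h.2⟩) huv
          (fun w hw => hbw w (Finset.filter_subset _ _ hw)))
      · exact hS2sup (hS2bnd u v (Finset.mem_filter.mpr ⟨hu, ⟨h.1, h.2.1⟩⟩)
          (Finset.mem_filter.mpr ⟨hv, ⟨h.2.2.1, h.2.2.2⟩⟩) huv
          (fun w hw => hbw w (Finset.filter_subset _ _ hw)))
      · exact hS3sup (hS3bnd u v (Finset.mem_filter.mpr ⟨hu, h.1⟩)
          (Finset.mem_filter.mpr ⟨hv, h.2⟩) huv
          (fun w hw => hbw w (Finset.filter_subset _ _ hw)))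
    · rw [hsupeq, Finset.card_union_of_disjoint (Finset.disjoint_union_left.mpr ⟨hd13, hd23⟩),
        Finset.card_union_of_disjoint hd12]
      omega


lemma polyForm_nonneg (E : Finset (Finset (ZMod n))) {x : ZMod n → ℝ}
    (hx : ∀ v, 0 ≤ x v) : 0 ≤ polyForm n E x := by
  unfold polyForm
  have : (0:ℝ) ≤ ∑ e ∈ E, ∏ v ∈ e, x v :=
    Finset.sum_nonneg fun e _ => Finset.prod_nonneg fun v _ => hx v
  linarith

lemma polyForm_mono {E E' : Finset (Finset (ZMod n))} (h : E ⊆ E') {x : ZMod n → ℝ}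
    (hx : ∀ v, 0 ≤ x v) : polyForm n E x ≤ polyForm n E' x := by
  unfold polyForm
  have := Finset.sum_le_sum_of_subset_of_nonneg (f := fun e => ∏ v ∈ e, x v) h
    (fun e _ _ => Finset.prod_nonneg fun v _ => hx v)
  linarith

lemma polyForm_continuous (E : Finset (Finset (ZMod n))) :
    Continuous (fun x : ZMod n → ℝ => polyForm n E x) := by
  unfold polyForm
  exact continuous_const.mul (continuous_finset_sum _ fun e _ =>
    continuous_finset_prod _ fun v _ => continuous_apply v)

lemma exists_max (E : Finset (Finset (ZMod n))) :
    ∃ x : ZMod n → ℝ, (∀ v, 0 ≤ x v) ∧ (∑ v, (x v) ^ 3) = 1 ∧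
      specRad n E = polyForm n E x ∧
      ∀ y : ZMod n → ℝ, (∀ v, 0 ≤ y v) → (∑ v, (y v) ^ 3) = 1 →
        polyForm n E y ≤ polyForm n E x := by
  set K : Set (ZMod n → ℝ) := {x | (∀ v, 0 ≤ x v) ∧ ∑ v, (x v) ^ 3 = 1} with hK
  have hKne : K.Nonempty := by
    refine ⟨fun v => if v = 0 then 1 else 0, fun v => by dsimp only; split_ifs <;> norm_num, ?_⟩
    rw [Finset.sum_eq_single (0 : ZMod n)]
    · simp
    · intro b _ hb; simp [hb]
    · intro h; exact absurd (Finset.mem_univ _) h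
  have hKsub : K ⊆ Set.pi Set.univ (fun _ : ZMod n => Set.Icc (0:ℝ) 1) := by
    rintro x ⟨hx0, hx1⟩ v _
    refine ⟨hx0 v, ?_⟩
    have hle : (x v) ^ 3 ≤ 1 := by
      rw [← hx1]
      exact Finset.single_le_sum (f := fun v => (x v)^3)
        (fun i _ => pow_nonneg (hx0 i) 3) (Finset.mem_univ v)
    nlinarith [hx0 v, sq_nonneg (x v), sq_nonneg (x v + 1), sq_nonneg (x v - 1)]
  have hKclosed : IsClosed K := by
    have : K = (⋂ v : ZMod n, {x : ZMod n → ℝ | 0 ≤ x v}) ∩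
        {x : ZMod n → ℝ | ∑ v, (x v) ^ 3 = 1} := by
      ext x; simp [hK, Set.mem_iInter, forall_and]
    rw [this]
    refine IsClosed.inter (isClosed_iInter fun v => ?_) ?_
    · exact isClosed_le continuous_const (continuous_apply v)
    · exact isClosed_eq (continuous_finset_sum _ fun v _ =>
        (continuous_apply v).pow 3) continuous_const
  have hKcompact : IsCompact K :=
    IsCompact.of_isClosed_subset (isCompact_univ_pi fun _ => isCompact_Icc) hKclosed hKsub
  obtain ⟨x, hxK, hxmax⟩ := hKcompact.exists_isMaxOn hKne
    ((polyForm_continuous E).continuousOn)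
  refine ⟨x, hxK.1, hxK.2, ?_, fun y hy0 hy1 => hxmax (Set.mem_setOf.mpr ⟨hy0, hy1⟩)⟩
  have hset : {r : ℝ | ∃ x : ZMod n → ℝ,
      (∀ v, 0 ≤ x v) ∧ (∑ᶠ v, (x v) ^ 3) = 1 ∧ r = polyForm n E x} =
      (fun x => polyForm n E x) '' K := by
    ext r
    constructor
    · rintro ⟨y, h1, h2, rfl⟩
      rw [finsum_eq_sum_of_fintype] at h2
      exact ⟨y, ⟨h1, h2⟩, rfl⟩
    · rintro ⟨y, ⟨h1, h2⟩, rfl⟩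
      exact ⟨y, h1, by rw [finsum_eq_sum_of_fintype]; exact h2, rfl⟩
  show sSup _ = _
  rw [hset]
  apply IsGreatest.csSup_eq
  exact ⟨⟨x, hxK, rfl⟩, by rintro r ⟨y, hyK, rfl⟩; exact hxmax hyK⟩

lemma card3' {α : Type*} [DecidableEq α] {a b c : α} (h1 : a ≠ b) (h2 : a ≠ c) (h3 : b ≠ c) :
    ({a, b, c} : Finset α).card = 3 := by
  rw [Finset.card_insert_of_notMem (by simp [h1, h2]),
    Finset.card_insert_of_notMem (by simp [h3]), Finset.card_singleton]

lemma no_zero {E' : Finset (Finset (ZMod n))} (h3 : ∀ e ∈ E', e.card = 3)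
    {x : ZMod n → ℝ} (hx0 : ∀ v, 0 ≤ x v) (hx1 : ∑ v, (x v) ^ 3 = 1)
    (hmax : ∀ y : ZMod n → ℝ, (∀ v, 0 ≤ y v) → (∑ v, (y v) ^ 3 = 1) →
      polyForm n E' y ≤ polyForm n E' x)
    {e : Finset (ZMod n)} (he : e ∈ E') {s z : ZMod n} (hs : s ∈ e) (hz : z ∈ e)
    (hxs : 0 < x s) (hxz : x z = 0) : False := by
  have hsz : s ≠ z := fun h => by rw [h, hxz] at hxs; exact lt_irrefl _ hxs
  -- find the third vertex
  have hszsub : ({s, z} : Finset (ZMod n)) ⊆ e := by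
    intro t ht
    rcases Finset.mem_insert.mp ht with rfl | ht
    · exact hs
    · rw [Finset.mem_singleton] at ht; subst ht; exact hz
  have hcard1 : (e \ ({s, z} : Finset (ZMod n))).card = 1 := by
    rw [Finset.card_sdiff_of_subset hszsub, h3 e he, Finset.card_pair hsz]
  obtain ⟨w, hw⟩ := Finset.card_eq_one.mp hcard1
  have hwmem : w ∈ e \ ({s, z} : Finset (ZMod n)) := hw ▸ Finset.mem_singleton_self w
  have hwe : w ∈ e := (Finset.mem_sdiff.mp hwmem).1
  have hwsz : w ∉ ({s, z} : Finset (ZMod n)) := (Finset.mem_sdiff.mp hwmem).2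
  have hws : s ≠ w := fun h => hwsz (by rw [← h]; simp)
  have hwz : z ≠ w := fun h => hwsz (by rw [← h]; simp)
  have heq : e = {s, z, w} := by
    refine (Finset.eq_of_subset_of_card_le ?_ ?_).symm
    · intro t ht
      rcases Finset.mem_insert.mp ht with rfl | ht
      · exact hs
      · rcases Finset.mem_insert.mp ht with rfl | ht
        · exact hz
        · rw [Finset.mem_singleton] at ht; subst ht; exact hwe
    · rw [h3 e he, card3' hsz hws hwz]
  set lam := polyForm n E' x with hlam
  have hlam0 : 0 ≤ lam := polyForm_nonneg E' hx0
  have hd : (0:ℝ) < 2 * lam + 2 := by linarith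
  set t : ℝ := 3 * x s / (2 * lam + 2) with ht_def
  have ht : 0 < t := div_pos (by linarith) hd
  have htkey : 2 * lam * t < 3 * x s := by
    rw [show 2 * lam * t = (2 * lam * (3 * x s)) / (2 * lam + 2) by rw [ht_def]; ring,
      div_lt_iff₀ hd]
    nlinarith
  set y : ZMod n → ℝ := fun v => if v = z then t else if v = w then max (x v) t else x v
    with hy_def
  have hy0 : ∀ v, 0 ≤ y v := by
    intro v
    rw [hy_def]
    dsimp only
    split_ifs
    · exact le_of_lt ht
    · exact le_trans (hx0 v) (le_max_left _ _)
    · exact hx0 v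
  have hyx : ∀ v, x v ≤ y v := by
    intro v
    rw [hy_def]
    dsimp only
    split_ifs with h1 h2
    · subst h1; rw [hxz]; exact le_of_lt ht
    · exact le_max_left _ _
    · exact le_refl _
  have hyz : y z = t := by simp [hy_def]
  have hyw : y w = max (x w) t := by simp [hy_def, (show w ≠ z from fun h => hwz h.symm)]
  have hys : y s = x s := by simp [hy_def, hsz, hws]
  set N : ℝ := ∑ v, (y v) ^ 3 with hN_def
  have hN1 : 1 ≤ N := by
    rw [hN_def, ← hx1]
    exact Finset.sum_le_sum fun i _ => pow_le_pow_left₀ (hx0 i) (hyx i) 3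
  have hNle : N ≤ 1 + 2 * t ^ 3 := by
    have hple : ∀ v ∈ Finset.univ, (y v) ^ 3 ≤
        (x v) ^ 3 + ((if v = z then t ^ 3 else 0) + (if v = w then t ^ 3 else 0)) := by
      intro v _
      by_cases hvz : v = z
      · subst hvz
        rw [hyz, hxz, if_pos rfl, if_neg hwz]
        norm_num
      · by_cases hvw : v = w
        · subst hvw
          rw [hyw, if_neg hvz, if_pos rfl]
          rcases le_total (x v) t with h | h
          · rw [max_eq_right h]
            nlinarith [pow_nonneg (hx0 v) 3]
          · rw [max_eq_left h]
            nlinarith [pow_nonneg (le_of_lt ht) 3]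
        · rw [hy_def]
          simp only [if_neg hvz, if_neg hvw]
          norm_num
    calc N ≤ ∑ v, ((x v) ^ 3 + ((if v = z then t ^ 3 else 0) + (if v = w then t ^ 3 else 0)))
        := Finset.sum_le_sum hple
      _ = 1 + 2 * t ^ 3 := by
        rw [Finset.sum_add_distrib, hx1, Finset.sum_add_distrib,
          Finset.sum_ite_eq' Finset.univ z (fun _ => t ^ 3),
          Finset.sum_ite_eq' Finset.univ w (fun _ => t ^ 3)]
        simp; ring
  have hex : ∏ v ∈ e, x v = 0 := by
    apply Finset.prod_eq_zero hz hxz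
  have hey : x s * t * t ≤ ∏ v ∈ e, y v := by
    rw [heq, Finset.prod_insert (by simp [hsz, hws]), Finset.prod_pair hwz]
    rw [hys, hyz, hyw]
    have h1 : t ≤ max (x w) t := le_max_right _ _
    calc x s * t * t = x s * (t * t) := by ring
      _ ≤ x s * (t * max (x w) t) :=
        mul_le_mul_of_nonneg_left (mul_le_mul_of_nonneg_left h1 (le_of_lt ht))
          (le_of_lt hxs)
  have hgain : lam + 3 * (x s * t * t) ≤ polyForm n E' y := by
    have hsx : ∑ f ∈ E', ∏ v ∈ f, x v
        = (∏ v ∈ e, x v) + ∑ f ∈ E'.erase e, ∏ v ∈ f, x v :=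
      (Finset.add_sum_erase _ _ he).symm
    have hsy : ∑ f ∈ E', ∏ v ∈ f, y v
        = (∏ v ∈ e, y v) + ∑ f ∈ E'.erase e, ∏ v ∈ f, y v :=
      (Finset.add_sum_erase _ _ he).symm
    have herase : ∑ f ∈ E'.erase e, ∏ v ∈ f, x v ≤ ∑ f ∈ E'.erase e, ∏ v ∈ f, y v :=
      Finset.sum_le_sum fun f _ => Finset.prod_le_prod (fun v _ => hx0 v) (fun v _ => hyx v)
    rw [hlam]
    unfold polyForm
    rw [hsx, hsy, hex]
    linarith
  -- normalize y and contradict maximality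
  have hNpos : (0:ℝ) < N := by linarith
  set c : ℝ := N ^ ((1:ℝ)/3) with hc_def
  have hc : 0 < c := Real.rpow_pos_of_pos hNpos _
  have hc3 : c ^ 3 = N := by
    rw [hc_def, ← Real.rpow_natCast (N ^ ((1:ℝ)/3)) 3, ← Real.rpow_mul (le_of_lt hNpos)]
    norm_num
  set u : ZMod n → ℝ := fun v => y v / c with hu_def
  have hu0 : ∀ v, 0 ≤ u v := fun v => div_nonneg (hy0 v) (le_of_lt hc)
  have hu1 : ∑ v, (u v) ^ 3 = 1 := by
    rw [hu_def]
    dsimp only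
    have : ∀ v : ZMod n, (y v / c) ^ 3 = (y v) ^ 3 / c ^ 3 := fun v => div_pow _ _ _
    simp_rw [this]
    rw [← Finset.sum_div, ← hN_def, hc3, div_self (ne_of_gt hNpos)]
  have hPu : polyForm n E' u = polyForm n E' y / N := by
    unfold polyForm
    rw [hu_def]
    have hprod : ∀ f ∈ E', ∏ v ∈ f, (y v / c) = (∏ v ∈ f, y v) / N := by
      intro f hf
      rw [Finset.prod_div_distrib, Finset.prod_const, h3 f hf, hc3]
    rw [Finset.sum_congr rfl hprod, ← Finset.sum_div]
    ring
  have hcontr := hmax u hu0 hu1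
  rw [hPu] at hcontr
  have hlamN : lam * N < polyForm n E' y := by
    have h1 : lam * N ≤ lam * (1 + 2 * t ^ 3) := by
      apply mul_le_mul_of_nonneg_left hNle hlam0
    have h2 : 2 * lam * t ^ 3 < 3 * x s * t ^ 2 := by
      have := mul_lt_mul_of_pos_right htkey (show (0:ℝ) < t ^ 2 by positivity)
      nlinarith [this]
    nlinarith [hgain]
  rw [div_le_iff₀ hNpos] at hcontr
  linarith


lemma maximizer_pos (hn : 3 ≤ n) {E' : Finset (Finset (ZMod n))}
    (hmo : IsMaxOuterplanar n E') {x : ZMod n → ℝ} (hx0 : ∀ v, 0 ≤ x v)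
    (hx1 : ∑ v, (x v) ^ 3 = 1)
    (hmax : ∀ y : ZMod n → ℝ, (∀ v, 0 ≤ y v) → (∑ v, (y v) ^ 3 = 1) →
      polyForm n E' y ≤ polyForm n E' x) :
    ∀ v, 0 < x v := by
  by_contra hcon
  push_neg at hcon
  obtain ⟨v0, hv0⟩ := hcon
  have hv0z : x v0 = 0 := le_antisymm hv0 (hx0 v0)
  by_cases hsplit : ∀ e ∈ E', (∀ u ∈ e, x u ≠ 0) ∨ (∀ u ∈ e, x u = 0)
  · obtain ⟨h3, hcardE, σ, hσ⟩ := hmo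
    set S := Finset.univ.filter (fun v : ZMod n => ¬ x v = 0) with hS
    set Z := Finset.univ.filter (fun v : ZMod n => x v = 0) with hZ
    have hSZcard : Z.card + S.card = n := by
      rw [hS, hZ, Finset.card_filter_add_card_filter_not (fun v => x v = 0),
        Finset.card_univ, ZMod.card]
    have hZcard : 1 ≤ Z.card := Finset.card_pos.mpr
      ⟨v0, Finset.mem_filter.mpr ⟨Finset.mem_univ _, hv0z⟩⟩
    have hScard : 1 ≤ S.card := by
      rcases Finset.eq_empty_or_nonempty S with h | h
      · exfalso
        have hzero : ∑ v, (x v) ^ 3 = 0 := Finset.sum_eq_zero fun v _ => by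
          have hv : v ∉ S := h ▸ Finset.notMem_empty v
          rw [hS, Finset.mem_filter] at hv
          push_neg at hv
          rw [hv (Finset.mem_univ _)]
          ring
        rw [hx1] at hzero
        norm_num at hzero
      · exact Finset.card_pos.mpr h
    set G := E'.image (fun e => e.image σ) with hG
    have hGcard : G.card = n - 2 := by
      rw [hG, Finset.card_image_of_injective _ (Finset.image_injective σ.injective), hcardE]
    have hGNC : NCF n G := by
      constructor
      · intro g hg
        obtain ⟨e, he, rfl⟩ := Finset.mem_image.mp hg
        rw [Finset.card_image_of_injective _ σ.injective, h3 e he]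
      · intro g1 h1 g2 h2 hne
        obtain ⟨e1, he1, rfl⟩ := Finset.mem_image.mp h1
        obtain ⟨e2, he2, rfl⟩ := Finset.mem_image.mp h2
        exact hσ e1 he1 e2 he2 (fun h => hne (by rw [h]))
    set Sσ := S.image σ with hSσ
    set Zσ := Z.image σ with hZσ
    have hGsplit : ∀ g ∈ G, g ⊆ Sσ ∨ g ⊆ Zσ := by
      intro g hg
      obtain ⟨e, he, rfl⟩ := Finset.mem_image.mp hg
      rcases hsplit e he with h | h
      · left
        intro u hu
        obtain ⟨w, hw, rfl⟩ := Finset.mem_image.mp hu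
        exact Finset.mem_image_of_mem σ (Finset.mem_filter.mpr ⟨Finset.mem_univ _, h w hw⟩)
      · right
        intro u hu
        obtain ⟨w, hw, rfl⟩ := Finset.mem_image.mp hu
        exact Finset.mem_image_of_mem σ (Finset.mem_filter.mpr ⟨Finset.mem_univ _, h w hw⟩)
    have hsubNC : ∀ H : Finset (Finset (ZMod n)), H ⊆ G → NCF n H := fun H hH =>
      ⟨fun f hf => hGNC.1 f (hH hf), fun e1 h1 e2 h2 hne => hGNC.2 e1 (hH h1) e2 (hH h2) hne⟩
    have hb1 : (G.filter (fun g => g ⊆ Sσ)).card ≤ Sσ.card - 2 :=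
      bound_aux Sσ.card Sσ _ le_rfl (hsubNC _ (Finset.filter_subset _ _))
        (fun f hf => (Finset.mem_filter.mp hf).2)
    have hb2 : (G.filter (fun g => g ⊆ Zσ)).card ≤ Zσ.card - 2 :=
      bound_aux Zσ.card Zσ _ le_rfl (hsubNC _ (Finset.filter_subset _ _))
        (fun f hf => (Finset.mem_filter.mp hf).2)
    have hGsub : G ⊆ (G.filter (fun g => g ⊆ Sσ)) ∪ (G.filter (fun g => g ⊆ Zσ)) := by
      intro g hg
      rcases hGsplit g hg with h | h
      · exact Finset.mem_union_left _ (Finset.mem_filter.mpr ⟨hg, h⟩)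
      · exact Finset.mem_union_right _ (Finset.mem_filter.mpr ⟨hg, h⟩)
    have hGle : G.card ≤ (G.filter (fun g => g ⊆ Sσ)).card + (G.filter (fun g => g ⊆ Zσ)).card :=
      le_trans (Finset.card_le_card hGsub) (Finset.card_union_le _ _)
    have hSσcard : Sσ.card = S.card := Finset.card_image_of_injective _ σ.injective
    have hZσcard : Zσ.card = Z.card := Finset.card_image_of_injective _ σ.injective
    omega
  · push_neg at hsplit
    obtain ⟨e, he, hz', hs'⟩ := hsplit
    obtain ⟨z, hz, hz0⟩ := hz'
    obtain ⟨s, hs, hs0⟩ := hs'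
    exact no_zero hmo.1 hx0 hx1 hmax he hs hz
      (lt_of_le_of_ne (hx0 s) (Ne.symm hs0)) hz0

lemma shadow_image (E : Finset (Finset (ZMod n))) (σ : ZMod n → ZMod n)
    (hσ : Function.Injective σ) :
    (E.image (fun e => e.image σ)).sup (fun f => f.powersetCard 2)
      = (E.sup (fun f => f.powersetCard 2)).image (fun p => p.image σ) := by
  ext p
  simp only [Finset.mem_sup, Finset.mem_image, Finset.mem_powersetCard]
  constructor
  · rintro ⟨g, ⟨e, he, rfl⟩, hpsub, hp2⟩
    obtain ⟨q, hq, hqim⟩ := Finset.subset_image_iff.mp hpsub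
    refine ⟨q, ⟨e, he, hq, ?_⟩, hqim⟩
    rw [← hqim, Finset.card_image_of_injective _ hσ] at hp2
    exact hp2
  · rintro ⟨q, ⟨e, he, hqe, hq2⟩, rfl⟩
    exact ⟨e.image σ, ⟨e, he, rfl⟩, Finset.image_subset_image hqe,
      by rw [Finset.card_image_of_injective _ hσ, hq2]⟩

end Aux
/-- An extremal outerplanar 3-uniform hypergraph on `n ≥ 3` vertices is edge-maximal:
it is itself maximal outerplanar (so has exactly `n - 2` hyperedges, pairwise non-crossing
under a suitable bijection with `ZMod n`), and its shadow has exactly `2n - 3` edges. -/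
theorem stmt_9 (n : ℕ) (hn : 3 ≤ n) (E : Finset (Finset (ZMod n)))
    (hE : IsExtremal n E) :
    IsMaxOuterplanar n E ∧ (shadowEdges n E).card = 2 * n - 3 := by
  haveI : NeZero n := ⟨by omega⟩
  obtain ⟨⟨E', hEE', hmo⟩, hbest⟩ := hE
  obtain ⟨y, hy0, hy1, hyspec, hymax⟩ := exists_max E
  obtain ⟨x', hx'0, hx'1, hx'spec, hx'max⟩ := exists_max E'
  have hmono : specRad n E ≤ specRad n E' := by
    rw [hyspec, hx'spec]
    exact le_trans (polyForm_mono hEE' hy0) (hx'max y hy0 hy1)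
  have hle : specRad n E' ≤ specRad n E := hbest E' ⟨E', Finset.Subset.refl _, hmo⟩
  have heqspec : specRad n E' = specRad n E := le_antisymm hle hmono
  have hyE' : polyForm n E' y = polyForm n E' x' := by
    apply le_antisymm (hx'max y hy0 hy1)
    calc polyForm n E' x' = specRad n E' := hx'spec.symm
      _ = specRad n E := heqspec
      _ = polyForm n E y := hyspec
      _ ≤ polyForm n E' y := polyForm_mono hEE' hy0
  have hymax' : ∀ z : ZMod n → ℝ, (∀ v, 0 ≤ z v) → (∑ v, (z v) ^ 3 = 1) →
      polyForm n E' z ≤ polyForm n E' y :=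
    fun z h1 h2 => (hx'max z h1 h2).trans hyE'.ge
  have hpos : ∀ v, 0 < y v := maximizer_pos hn hmo hy0 hy1 hymax'
  have hEeq : E = E' := by
    by_contra hne
    obtain ⟨e0, he0E', he0E⟩ := Finset.exists_of_ssubset
      (lt_of_le_of_ne hEE' hne)
    have hPle : polyForm n E' y = polyForm n E y := by
      calc polyForm n E' y = polyForm n E' x' := hyE'
        _ = specRad n E' := hx'spec.symm
        _ = specRad n E := heqspec
        _ = polyForm n E y := hyspec
    have hsplitsum : ∑ f ∈ E' \ E, ∏ v ∈ f, y v + ∑ f ∈ E, ∏ v ∈ f, y v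
        = ∑ f ∈ E', ∏ v ∈ f, y v := Finset.sum_sdiff hEE'
    have hdiff : ∑ f ∈ E' \ E, ∏ v ∈ f, y v ≤ 0 := by
      unfold polyForm at hPle
      linarith
    have hnn : ∀ f ∈ E' \ E, (0:ℝ) ≤ ∏ v ∈ f, y v :=
      fun f _ => Finset.prod_nonneg fun v _ => hy0 v
    have hzero : ∏ v ∈ e0, y v = 0 :=
      (Finset.sum_eq_zero_iff_of_nonneg hnn).mp
        (le_antisymm hdiff (Finset.sum_nonneg hnn)) e0
        (Finset.mem_sdiff.mpr ⟨he0E', he0E⟩)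
    obtain ⟨v, _, hv⟩ := Finset.prod_eq_zero_iff.mp hzero
    exact absurd hv (ne_of_gt (hpos v))
  have hmoE : IsMaxOuterplanar n E := hEeq ▸ hmo
  refine ⟨hmoE, ?_⟩
  obtain ⟨h3, hcardE, σ, hσ⟩ := hmoE
  set G := E.image (fun e => e.image (σ : ZMod n → ZMod n)) with hGdef
  have hGcard : G.card = n - 2 := by
    rw [hGdef, Finset.card_image_of_injective _ (Finset.image_injective σ.injective), hcardE]
  have hGNC : NCF n G := by
    constructor
    · intro g hg
      obtain ⟨e, he, rfl⟩ := Finset.mem_image.mp hg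
      rw [Finset.card_image_of_injective _ σ.injective, h3 e he]
    · intro g1 h1 g2 h2 hneq
      obtain ⟨e1, he1, rfl⟩ := Finset.mem_image.mp h1
      obtain ⟨e2, he2, rfl⟩ := Finset.mem_image.mp h2
      exact hσ e1 he1 e2 he2 (fun h => hneq (by rw [h]))
  have huniv : (Finset.univ : Finset (ZMod n)).card = n := by
    rw [Finset.card_univ, ZMod.card]
  have hGne : G.Nonempty := Finset.card_pos.mp (by omega)
  have hcount := (count_aux (Finset.univ : Finset (ZMod n)).card Finset.univ G le_rfl hGNC
    (fun f _ => Finset.subset_univ f) hGne (by omega)).2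
  have htrans : (G.sup (fun f => f.powersetCard 2)).card = (shadowEdges n E).card := by
    rw [hGdef, shadow_image E σ σ.injective]
    exact Finset.card_image_of_injective _ (Finset.image_injective σ.injective)
  omega
end
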